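/- Let Z be a standard Gaussian random variable, fix c ∈ ℝ, and for v ≥ 0 let ξ_v be a centered Gaussian with variance v, independent of Z; set z_v = cZ + ξ_v and define the expected BCE loss L(z_v) = E[−σ(Z)·z_v + log(1 + e^{z_v})]. Then L is strictly increasing in the noise variance: if 0 ≤ v < u, then L(z_v) < L(z_u). -/

import Mathlib

/-!
By independence, `(Z, ξ_v)` has the law of `(x, √v y)` with `(x, y)` standard Gaussian on `ℝ²`, so
`L(z_v) = E[ℓ(x, c x + √v y)]` for `ℓ(x, z) = -σ(x) z + log(1 + e^z)`. Since `y` is symmetric, this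
is also `½ E[ℓ(x, c x + √v y) + ℓ(x, c x - √v y)]`; there the term linear in `z` cancels and what
is left is `t ↦ softplus(m + t) + softplus(m - t)`, strictly increasing in `|t|` because
softplus is strictly convex. As `y ≠ 0` almost surely, the pointwise inequality integrates to a
strict one.
-/

open MeasureTheory ProbabilityTheory

/-- The sigmoid (logistic) function `σ(z) = 1 / (1 + e^{-z})`. -/
noncomputable def sigmoid (z : ℝ) : ℝ := 1 / (1 + Real.exp (-z))

/-- Expected BCE loss against soft labels `σ(Z)`: with `y | Z ~ Bernoulli(σ(Z))`, the
expected BCE loss of a logit random variable `f` is `E[−σ(Z)·f + log(1+e^f)]`. -/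
noncomputable def softLoss {Ω : Type*} [MeasurableSpace Ω] (P : Measure Ω)
    (Z f : Ω → ℝ) : ℝ :=
  ∫ ω, (-(sigmoid (Z ω)) * f ω + Real.log (1 + Real.exp (f ω))) ∂P

open scoped NNReal

lemma sigmoid_eq_real_sigmoid : sigmoid = Real.sigmoid := by
  ext x
  rw [sigmoid, Real.sigmoid_def, one_div]

noncomputable def softplus (t : ℝ) : ℝ := Real.log (1 + Real.exp t)

@[fun_prop]
lemma continuous_softplus : Continuous softplus :=
  (continuous_const.add Real.continuous_exp).log fun t => (add_pos one_pos (Real.exp_pos t)).ne'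

lemma softplus_nonneg (t : ℝ) : 0 ≤ softplus t :=
  Real.log_nonneg (by linarith [Real.exp_pos t])

lemma softplus_le_log_two_add_abs (t : ℝ) : softplus t ≤ Real.log 2 + |t| := by
  have h : 1 + Real.exp t ≤ 2 * Real.exp |t| := by
    linarith [Real.exp_le_exp.2 (le_abs_self t), Real.one_le_exp (abs_nonneg t)]
  calc softplus t ≤ Real.log (2 * Real.exp |t|) := Real.log_le_log (by positivity) h
    _ = Real.log 2 + |t| := by rw [Real.log_mul two_ne_zero (Real.exp_ne_zero _), Real.log_exp]

lemma hasDerivAt_softplus (t : ℝ) : HasDerivAt softplus (Real.sigmoid t) t := by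
  have h : Real.exp t / (1 + Real.exp t) = Real.sigmoid t := by
    rw [Real.sigmoid_def, Real.exp_neg]
    field_simp
    ring
  rw [← h]
  exact ((Real.hasDerivAt_exp t).const_add 1).log (by positivity)

lemma strictConvexOn_softplus : StrictConvexOn ℝ Set.univ softplus := by
  refine StrictMono.strictConvexOn_univ_of_deriv continuous_softplus ?_
  rw [funext fun t => (hasDerivAt_softplus t).deriv]
  exact Real.sigmoid_strictMono

lemma StrictConvexOn.add_sub_lt_add_sub {s : Set ℝ} {f : ℝ → ℝ} (hf : StrictConvexOn ℝ s f)
    {t a b : ℝ} (hplus : t + b ∈ s) (hminus : t - b ∈ s) (hab : |a| < |b|) :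
    f (t + a) + f (t - a) < f (t + b) + f (t - b) := by
  have hsymm : ∀ x, f (t + x) + f (t - x) = f (t + |x|) + f (t - |x|) := fun x => by
    rcases abs_cases x with ⟨h, -⟩ | ⟨h, -⟩ <;> rw [h]
    rw [sub_neg_eq_add, ← sub_eq_add_neg, add_comm]
  have hmem : t + |b| ∈ s ∧ t - |b| ∈ s := by
    rcases abs_cases b with ⟨h, -⟩ | ⟨h, -⟩ <;> rw [h]
    · exact ⟨hplus, hminus⟩
    · exact ⟨by rwa [← sub_eq_add_neg], by rwa [sub_neg_eq_add]⟩
  rw [hsymm a, hsymm b]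
  obtain ⟨ha, hb⟩ : 0 ≤ |a| ∧ 0 < |b| := ⟨abs_nonneg a, (abs_nonneg a).trans_lt hab⟩
  generalize |a| = a at ha hab
  generalize |b| = b at hb hab hmem
  have hne : t + b ≠ t - b := fun h => hb.ne' (by linarith)
  have hwp : 0 < (b + a) / (2 * b) := by positivity
  have hwm : 0 < (b - a) / (2 * b) := div_pos (by linarith) (by positivity)
  have hsum : (b + a) / (2 * b) + (b - a) / (2 * b) = 1 := by field_simp; ring
  have h₁ := hf.2 hmem.1 hmem.2 hne hwp hwm hsum
  have h₂ := hf.2 hmem.1 hmem.2 hne hwm hwp (by rw [add_comm, hsum])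
  simp only [smul_eq_mul] at h₁ h₂
  have e₁ : (b + a) / (2 * b) * (t + b) + (b - a) / (2 * b) * (t - b) = t + a := by
    field_simp; ring
  have e₂ : (b - a) / (2 * b) * (t + b) + (b + a) / (2 * b) * (t - b) = t - a := by
    field_simp; ring
  rw [e₁] at h₁
  rw [e₂] at h₂
  linear_combination h₁ + h₂ + (f (t + b) + f (t - b)) * hsum

noncomputable def bceLoss (x z : ℝ) : ℝ := -sigmoid x * z + softplus z

@[fun_prop]
lemma Continuous.bceLoss {α : Type*} [TopologicalSpace α] {f g : α → ℝ} (hf : Continuous f)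
    (hg : Continuous g) : Continuous fun a => bceLoss (f a) (g a) := by
  unfold _root_.bceLoss
  rw [sigmoid_eq_real_sigmoid]
  fun_prop

lemma abs_bceLoss_le (x z : ℝ) : |bceLoss x z| ≤ 2 * |z| + Real.log 2 := by
  have hσ : |sigmoid x| ≤ 1 := by
    rw [sigmoid_eq_real_sigmoid, abs_of_pos (Real.sigmoid_pos x)]
    exact Real.sigmoid_le_one x
  calc |bceLoss x z| ≤ |sigmoid x| * |z| + softplus z := by
        simpa only [bceLoss, abs_neg, abs_mul, abs_of_nonneg (softplus_nonneg z)] using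
          abs_add_le (-sigmoid x * z) (softplus z)
    _ ≤ 1 * |z| + (Real.log 2 + |z|) :=
        add_le_add (mul_le_mul_of_nonneg_right hσ (abs_nonneg z))
          (softplus_le_log_two_add_abs z)
    _ = 2 * |z| + Real.log 2 := by ring

lemma bceLoss_add_add_bceLoss_sub_lt (x m : ℝ) {e e' : ℝ} (h : |e| < |e'|) :
    bceLoss x (m + e) + bceLoss x (m - e) < bceLoss x (m + e') + bceLoss x (m - e') := by
  have := strictConvexOn_softplus.add_sub_lt_add_sub (t := m) trivial trivial h
  unfold bceLoss
  linarith

lemma integral_lt_integral_of_ae_lt {α : Type*} [MeasurableSpace α] {μ : Measure α} [NeZero μ]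
    {f g : α → ℝ} (hf : Integrable f μ) (hg : Integrable g μ) (h : ∀ᵐ a ∂μ, f a < g a) :
    ∫ a, f a ∂μ < ∫ a, g a ∂μ := by
  rw [← sub_pos, ← integral_sub hg hf,
    integral_pos_iff_support_of_nonneg_ae (h.mono fun a ha => (sub_pos.2 ha).le) (hg.sub hf),
    pos_iff_ne_zero]
  intro h0
  obtain ⟨a, hlt, hzero⟩ := (h.and (measure_eq_zero_iff_ae_notMem.1 h0)).exists
  exact hzero (sub_pos.2 hlt).ne'

lemma gaussianReal_map_sqrt_mul (w : ℝ≥0) :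
    (gaussianReal 0 1).map (Real.sqrt w * ·) = gaussianReal 0 w := by
  rw [gaussianReal_map_const_mul, mul_zero, mul_one]
  congr 1
  ext
  simp

noncomputable def gaussianNoiseLoss (μ : Measure ℝ) (c s : ℝ) : ℝ :=
  ∫ p, bceLoss p.1 (c * p.1 + s * p.2) ∂μ.prod (gaussianReal 0 1)

section gaussianNoiseLoss

variable (μ : Measure ℝ) [IsProbabilityMeasure μ]

lemma integrable_bceLoss_gaussianNoise (hμ : Integrable id μ) (c s : ℝ) :
    Integrable (fun p : ℝ × ℝ => bceLoss p.1 (c * p.1 + s * p.2)) (μ.prod (gaussianReal 0 1)) := by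
  have hlin : Integrable (fun p : ℝ × ℝ => c * p.1 + s * p.2) (μ.prod (gaussianReal 0 1)) :=
    ((hμ.comp_fst _).const_mul c).add
      (((memLp_id_gaussianReal 1).integrable le_rfl).comp_snd μ |>.const_mul s)
  refine ((hlin.abs.const_mul 2).add (integrable_const (Real.log 2))).mono'
    (by fun_prop : Continuous _).aestronglyMeasurable (ae_of_all _ fun p => ?_)
  exact abs_bceLoss_le _ _

lemma gaussianNoiseLoss_neg (c s : ℝ) : gaussianNoiseLoss μ c (-s) = gaussianNoiseLoss μ c s := by
  have h : (μ.prod (gaussianReal 0 1)).map (Prod.map id Neg.neg) = μ.prod (gaussianReal 0 1) := by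
    rw [← Measure.map_prod_map _ _ measurable_id measurable_neg, Measure.map_id,
      gaussianReal_map_neg, neg_zero]
  unfold gaussianNoiseLoss
  conv_rhs => rw [← h]
  rw [integral_map (by fun_prop) (by fun_prop : Continuous _).aestronglyMeasurable]
  simp only [Prod.map_fst, Prod.map_snd, id_eq, neg_mul, mul_neg]

lemma gaussianNoiseLoss_lt_of_abs_lt (hμ : Integrable id μ) (c : ℝ) {s s' : ℝ} (h : |s| < |s'|) :
    gaussianNoiseLoss μ c s < gaussianNoiseLoss μ c s' := by
  have : NullSingletonClass (gaussianReal 0 1) := nullSingletonClass_gaussianReal one_ne_zero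
  have hae : ∀ᵐ p ∂μ.prod (gaussianReal 0 1), p.2 ≠ 0 :=
    Measure.quasiMeasurePreserving_snd.ae (compl_mem_ae_iff.2 (measure_singleton 0))
  have hint := integrable_bceLoss_gaussianNoise μ hμ c
  have hsymm : ∀ s, 2 * gaussianNoiseLoss μ c s = ∫ p, (bceLoss p.1 (c * p.1 + s * p.2)
      + bceLoss p.1 (c * p.1 + -s * p.2)) ∂μ.prod (gaussianReal 0 1) := fun s => by
    rw [two_mul]
    nth_rw 2 [← gaussianNoiseLoss_neg]
    exact (integral_add (hint s) (hint (-s))).symm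
  have : 2 * gaussianNoiseLoss μ c s < 2 * gaussianNoiseLoss μ c s' := by
    rw [hsymm, hsymm]
    refine integral_lt_integral_of_ae_lt ((hint s).add (hint (-s))) ((hint s').add (hint (-s')))
      (hae.mono fun p hp => ?_)
    simpa only [neg_mul, ← sub_eq_add_neg] using bceLoss_add_add_bceLoss_sub_lt p.1 (c * p.1)
      (by simpa only [abs_mul] using mul_lt_mul_of_pos_right h (abs_pos.2 hp))
  linarith

end gaussianNoiseLoss

lemma softLoss_add_gaussianNoise_eq {Ω : Type*} [MeasurableSpace Ω] (P : Measure Ω)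
    [IsProbabilityMeasure P] {μ : Measure ℝ} [IsProbabilityMeasure μ] {Z ξ : Ω → ℝ} (c : ℝ)
    (w : ℝ≥0) (hZ : P.map Z = μ) (hξ : P.map ξ = gaussianReal 0 w) (hind : IndepFun Z ξ P) :
    softLoss P Z (fun ω => c * Z ω + ξ ω) = gaussianNoiseLoss μ c (Real.sqrt w) := by
  have hZm : AEMeasurable Z P := aemeasurable_of_map_neZero (by rw [hZ]; infer_instance)
  have hξm : AEMeasurable ξ P := aemeasurable_of_map_neZero (by rw [hξ]; infer_instance)
  have hlaw : P.map (fun ω => (Z ω, ξ ω))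
      = (μ.prod (gaussianReal 0 1)).map (Prod.map id (Real.sqrt w * ·)) := by
    rw [(indepFun_iff_map_prod_eq_prod_map_map hZm hξm).1 hind, hZ, hξ,
      ← Measure.map_prod_map _ _ measurable_id (measurable_const_mul _), Measure.map_id,
      gaussianReal_map_sqrt_mul]
  have hcont : Continuous fun p : ℝ × ℝ => bceLoss p.1 (c * p.1 + p.2) := by fun_prop
  change ∫ ω, bceLoss (Z ω) (c * Z ω + ξ ω) ∂P = _
  rw [← integral_map (f := fun p : ℝ × ℝ => bceLoss p.1 (c * p.1 + p.2)) (hZm.prodMk hξm)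
    hcont.aestronglyMeasurable, hlaw, integral_map (by fun_prop) hcont.aestronglyMeasurable]
  rfl

/-- For `z_v = cZ + ξ_v` with `Z` standard Gaussian and `ξ_v ~ N(0,v)` independent of `Z`,
the expected BCE loss is strictly increasing in the noise variance: if `0 ≤ v < u` then
`L(z_v) < L(z_u)`. -/
theorem softLoss_strict_mono_in_noise_variance
    {Ω : Type*} [MeasurableSpace Ω] (P : Measure Ω) [IsProbabilityMeasure P]
    (Z ξv ξu : Ω → ℝ) (c : ℝ) (v u : NNReal) (hvu : v < u)
    (hZ : Measure.map Z P = gaussianReal 0 1)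
    (hξv : Measure.map ξv P = gaussianReal 0 v)
    (hξu : Measure.map ξu P = gaussianReal 0 u)
    (hindv : IndepFun Z ξv P) (hindu : IndepFun Z ξu P) :
    softLoss P Z (fun ω => c * Z ω + ξv ω) < softLoss P Z (fun ω => c * Z ω + ξu ω) := by
  rw [softLoss_add_gaussianNoise_eq P c v hZ hξv hindv,
    softLoss_add_gaussianNoise_eq P c u hZ hξu hindu]
  refine gaussianNoiseLoss_lt_of_abs_lt _ ((memLp_id_gaussianReal 1).integrable le_rfl) c ?_
  rw [abs_of_nonneg (Real.sqrt_nonneg _), abs_of_nonneg (Real.sqrt_nonneg _)]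
  exact Real.sqrt_lt_sqrt v.coe_nonneg hvu
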